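/- arXiv:2602.06913 — 5 statements merged into one kernel-verified Lean document; each statement's English description precedes it below -/
import Mathlib

section
/- For any star-subalgebra A of M_n(ℂ) containing the identity, the double commutant of A equals A: Comm(Comm(A)) = A. -/
/-!
Since `A` is closed under adjoints, the orthogonal complement of an `A`-invariant subspace of
`ℂⁿ` is again `A`-invariant, so `ℂⁿ` is a semisimple `A`-module. An element of the double
commutant commutes with every `A`-linear endomorphism of `ℂⁿ`, so by the Jacobson density
theorem it agrees on a basis, hence everywhere, with the action of some element of `A`.
-/

theorem MulEquivClass.image_centralizer {M N F : Type*} [Mul M] [Mul N] [EquivLike F M N]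
    [MulEquivClass F M N] (e : F) (S : Set M) :
    e '' S.centralizer = (e '' S).centralizer := by
  ext y
  obtain ⟨x, rfl⟩ := EquivLike.surjective e y
  simp [Set.mem_centralizer_iff, ← _root_.map_mul, (EquivLike.injective e).eq_iff]

namespace StarSubalgebra

variable {𝕜 H : Type*} [RCLike 𝕜] [NormedAddCommGroup H] [InnerProductSpace 𝕜 H]
  [FiniteDimensional 𝕜 H] (B : StarSubalgebra 𝕜 (Module.End 𝕜 H))

theorem isSemisimpleModule_toSubalgebra : IsSemisimpleModule B.toSubalgebra H where
  exists_isCompl p := by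
    let q : Submodule B.toSubalgebra H :=
      { (p.restrictScalars 𝕜)ᗮ with
        smul_mem' := fun b v hv w hw ↦ by
          change inner 𝕜 w ((b : Module.End 𝕜 H) v) = 0
          rw [← LinearMap.adjoint_inner_left]
          exact hv _ (p.smul_mem ⟨star (b : Module.End 𝕜 H), star_mem (s := B) b.2⟩ hw) }
    exact ⟨q, (Submodule.isCompl_restrictScalars_iff 𝕜).mp (p.restrictScalars 𝕜).isCompl_orthogonal⟩

theorem centralizer_centralizer :
    Set.centralizer (Set.centralizer (B : Set (Module.End 𝕜 H))) = B := by
  classical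
  refine Set.Subset.antisymm (fun x hx ↦ ?_) Set.subset_centralizer_centralizer
  have := B.isSemisimpleModule_toSubalgebra
  let f : Module.End (Module.End B.toSubalgebra H) H :=
    { toFun := x
      map_add' := map_add x
      map_smul' := fun g v ↦ by
        have hg : g.restrictScalars 𝕜 ∈ Set.centralizer (B : Set (Module.End 𝕜 H)) :=
          fun b hb ↦ LinearMap.ext fun w ↦ (g.map_smul ⟨b, hb⟩ w).symm
        exact (LinearMap.congr_fun (hx _ hg) v).symm }
  let β := Module.finBasis 𝕜 H
  obtain ⟨r, hr⟩ := jacobson_density f (Finset.univ.image β)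
  have hxr : x = r := β.ext fun i ↦ hr _ (by simp)
  exact hxr ▸ r.2

end StarSubalgebra

/-- finite-dimensional double commutant theorem: for a unital
star-subalgebra A of M_n(ℂ), Comm(Comm(A)) = A. -/
theorem double_commutant {n : Type*} [Fintype n] [DecidableEq n]
    (A : StarSubalgebra ℂ (Matrix n n ℂ)) :
    Set.centralizer (Set.centralizer (A : Set (Matrix n n ℂ)))
      = (A : Set (Matrix n n ℂ)) := by
  let e := (LinearMap.toMatrixOrthonormal (EuclideanSpace.basisFun n ℂ)).symm
  refine (EquivLike.injective e).image_injective ?_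
  rw [MulEquivClass.image_centralizer, MulEquivClass.image_centralizer]
  exact (A.map e.toStarAlgHom).centralizer_centralizer
end

section
/- Let H_L and H_C be finite-dimensional complex Hilbert spaces and let R be a star-subalgebra of End(H_L ⊗ H_C) satisfying End(H_L) ⊗ 1 ⊆ R. Then there exists a star-subalgebra A of End(H_C) such that R = End(H_L) ⊗ A. -/
open Kronecker

/-!
Conjugating `x` by the matrix units `single k i 1 ⊗ₖ 1 ∈ R` and summing over `k` moves the
`(i, j)` block of `x` onto the diagonal, so `1 ⊗ₖ x.submatrix (i, ·) (j, ·) ∈ R`. Hence every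
block of an element of `R` lies in `A := {a | 1 ⊗ₖ a ∈ R}`, and `x = ∑ single i j 1 ⊗ₖ (block i j)`
lies in the span of `End(H_L) ⊗ A`. Conversely `m ⊗ₖ a = (m ⊗ₖ 1) * (1 ⊗ₖ a) ∈ R`.
-/

namespace Matrix

variable {l c α : Type*} [Fintype l] [DecidableEq l]

section CommSemiring

variable [CommSemiring α]

theorem sum_single_kronecker_submatrix (x : Matrix (l × c) (l × c) α) :
    ∑ i : l, ∑ j : l, single i j (1 : α) ⊗ₖ x.submatrix (i, ·) (j, ·) = x := by
  ext ⟨p, r⟩ ⟨q, s⟩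
  simp [sum_apply, kroneckerMap_apply, single, ite_and]

variable [Fintype c] [DecidableEq c]

theorem kronecker_one_mul_one_kronecker (m : Matrix l l α) (a : Matrix c c α) :
    (m ⊗ₖ (1 : Matrix c c α)) * ((1 : Matrix l l α) ⊗ₖ a) = m ⊗ₖ a := by
  rw [← mul_kronecker_mul, mul_one, one_mul]

theorem sum_single_kronecker_one_mul_mul (x : Matrix (l × c) (l × c) α) (i j : l) :
    ∑ k : l, (single k i (1 : α) ⊗ₖ (1 : Matrix c c α)) * x *
        (single j k (1 : α) ⊗ₖ (1 : Matrix c c α)) =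
      (1 : Matrix l l α) ⊗ₖ x.submatrix (i, ·) (j, ·) := by
  ext ⟨p, r⟩ ⟨q, s⟩
  simp [sum_apply, mul_apply, kroneckerMap_apply, single, Fintype.sum_prod_type, one_apply,
    ite_and, mul_ite, ite_mul, eq_comm]

theorem one_kronecker_submatrix_mem {S : Type*} [SetLike S (Matrix (l × c) (l × c) α)]
    [NonUnitalSubsemiringClass S (Matrix (l × c) (l × c) α)] {s : S}
    (hs : ∀ m : Matrix l l α, m ⊗ₖ (1 : Matrix c c α) ∈ s) {x : Matrix (l × c) (l × c) α}
    (hx : x ∈ s) (i j : l) :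
    (1 : Matrix l l α) ⊗ₖ x.submatrix (i, ·) (j, ·) ∈ s := by
  rw [← sum_single_kronecker_one_mul_mul]
  exact sum_mem fun k _ => mul_mem (mul_mem (hs _) hx) (hs _)

end CommSemiring

section StarRing

variable [Fintype c] [DecidableEq c] [CommSemiring α] [StarRing α]

variable (l c α) in
def oneKroneckerStarAlgHom : Matrix c c α →⋆ₐ[α] Matrix (l × c) (l × c) α where
  toFun a := (1 : Matrix l l α) ⊗ₖ a
  map_one' := one_kronecker_one
  map_mul' a b := by rw [← mul_kronecker_mul, one_mul]
  map_zero' := kronecker_zero _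
  map_add' := kronecker_add _
  commutes' r := by
    simp only [Algebra.algebraMap_eq_smul_one, kronecker_smul, one_kronecker_one]
  map_star' a := by
    simp [star_eq_conjTranspose, conjTranspose_kronecker]

theorem _root_.StarSubalgebra.coe_eq_span_kronecker_comap
    (R : StarSubalgebra α (Matrix (l × c) (l × c) α))
    (hR : ∀ m : Matrix l l α, m ⊗ₖ (1 : Matrix c c α) ∈ R) :
    (R : Set (Matrix (l × c) (l × c) α)) =
      ↑(Submodule.span α {x : Matrix (l × c) (l × c) α |
        ∃ m : Matrix l l α, ∃ a ∈ R.comap (oneKroneckerStarAlgHom l c α), x = m ⊗ₖ a}) := by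
  apply Set.Subset.antisymm
  · intro x hx
    rw [SetLike.mem_coe, ← sum_single_kronecker_submatrix x]
    exact Submodule.sum_mem _ fun i _ => Submodule.sum_mem _ fun j _ =>
      Submodule.subset_span ⟨_, _, one_kronecker_submatrix_mem hR hx i j, rfl⟩
  · refine Submodule.span_le (p := R.toSubalgebra.toSubmodule) |>.mpr ?_
    rintro _ ⟨m, a, ha, rfl⟩
    rw [← kronecker_one_mul_one_kronecker]
    exact R.mul_mem (hR m) ha

end StarRing

end Matrix

/-- if a star-subalgebra R of End(H_L ⊗ H_C) ≅ M_{l·c}(ℂ) contains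
End(H_L) ⊗ 1, then R = End(H_L) ⊗ A for some star-subalgebra A of End(H_C). -/
theorem subalgebra_containing_left_factor_is_product
    {l c : Type*} [Fintype l] [DecidableEq l] [Fintype c] [DecidableEq c]
    (R : StarSubalgebra ℂ (Matrix (l × c) (l × c) ℂ))
    (hR : ∀ m : Matrix l l ℂ, m ⊗ₖ (1 : Matrix c c ℂ) ∈ R) :
    ∃ A : StarSubalgebra ℂ (Matrix c c ℂ),
      (R : Set (Matrix (l × c) (l × c) ℂ)) =
        ↑(Submodule.span ℂ
            {x : Matrix (l × c) (l × c) ℂ |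
              ∃ m : Matrix l l ℂ, ∃ a ∈ A, x = m ⊗ₖ a}) :=
  ⟨_, R.coe_eq_span_kronecker_comap hR⟩
end

section
/- If A and B are star-subalgebras of M_m(ℂ) and M_n(ℂ) respectively, each containing the identity, then the commutant in M_m(ℂ) ⊗ M_n(ℂ) of A ⊗ B equals Comm(A) ⊗ Comm(B). -/
open Kronecker

section Aux

variable {m n : Type*} [Fintype m] [DecidableEq m] [Fintype n] [DecidableEq n]

private lemma aux_centralizer_span {M : Type*} [Ring M] [Algebra ℂ M] (S : Set M) :
    Set.centralizer (↑(Submodule.span ℂ S) : Set M) = Set.centralizer S := by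
  apply Set.Subset.antisymm
  · exact Set.centralizer_subset (fun s hs => Submodule.subset_span hs)
  · intro c hc
    rw [Set.mem_centralizer_iff]
    intro g hg
    induction hg using Submodule.span_induction with
    | mem x hx => exact hc x hx
    | zero => simp
    | add x y hx hy ihx ihy => rw [add_mul, mul_add, ihx, ihy]
    | smul a x hx ih => rw [smul_mul_assoc, mul_smul_comm, ih]

/-- The (k,l) block of x, where x is seen as an n×n matrix of m×m blocks. -/
private def Xblk (x : Matrix (m × n) (m × n) ℂ) (k l : n) : Matrix m m ℂ :=
  Matrix.of fun i j => x (i, k) (j, l)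

/-- The (i,j) block of x, where x is seen as an m×m matrix of n×n blocks. -/
private def Yblk (x : Matrix (m × n) (m × n) ℂ) (i j : m) : Matrix n n ℂ :=
  Matrix.of fun k l => x (i, k) (j, l)

private lemma sum_kron_std_right (f : n → n → Matrix m m ℂ) (i0 j0 : m) (k0 l0 : n) :
    (∑ k, ∑ l, (f k l) ⊗ₖ Matrix.single k l (1 : ℂ)) (i0, k0) (j0, l0)
      = f k0 l0 i0 j0 := by
  simp [Matrix.sum_apply, Matrix.kroneckerMap_apply, Matrix.single,
    Matrix.of_apply, mul_ite, mul_one, mul_zero, ite_and, Finset.sum_ite_eq,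
    Finset.sum_ite_eq']

private lemma sum_std_kron_right (g : m → m → Matrix n n ℂ) (i0 j0 : m) (k0 l0 : n) :
    (∑ i, ∑ j, (Matrix.single i j (1 : ℂ)) ⊗ₖ g i j) (i0, k0) (j0, l0)
      = g i0 j0 k0 l0 := by
  simp [Matrix.sum_apply, Matrix.kroneckerMap_apply, Matrix.single,
    Matrix.of_apply, ite_mul, one_mul, zero_mul, ite_and, Finset.sum_ite_eq,
    Finset.sum_ite_eq']

private lemma decompX (x : Matrix (m × n) (m × n) ℂ) :
    x = ∑ k, ∑ l, (Xblk x k l) ⊗ₖ Matrix.single k l (1 : ℂ) := by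
  ext ⟨i, k⟩ ⟨j, l⟩
  rw [sum_kron_std_right]
  rfl

private lemma Xblk_eq_sum (x : Matrix (m × n) (m × n) ℂ) (k l : n) :
    Xblk x k l = ∑ i, ∑ j, x (i, k) (j, l) • Matrix.single i j (1 : ℂ) := by
  ext i0 j0
  simp [Xblk, Matrix.sum_apply, Matrix.single, Matrix.of_apply, mul_ite,
    mul_one, mul_zero, ite_and, Finset.sum_ite_eq, Finset.sum_ite_eq']

private lemma commX (x : Matrix (m × n) (m × n) ℂ) (a : Matrix m m ℂ)
    (h : (a ⊗ₖ (1 : Matrix n n ℂ)) * x = x * (a ⊗ₖ (1 : Matrix n n ℂ))) (k l : n) :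
    a * Xblk x k l = Xblk x k l * a := by
  ext i j
  have h' := congrFun (congrFun h (i, k)) (j, l)
  simp only [Matrix.mul_apply, Fintype.sum_prod_type, Matrix.kroneckerMap_apply,
    Matrix.one_apply, mul_ite, mul_one, mul_zero, ite_mul, zero_mul,
    Finset.sum_ite_eq, Finset.sum_ite_eq', Finset.mem_univ, if_true] at h' ⊢
  convert h' using 1 <;> simp [Xblk, Matrix.of_apply]

private lemma commY (x : Matrix (m × n) (m × n) ℂ) (b : Matrix n n ℂ)
    (h : ((1 : Matrix m m ℂ) ⊗ₖ b) * x = x * ((1 : Matrix m m ℂ) ⊗ₖ b)) (i j : m) :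
    b * Yblk x i j = Yblk x i j * b := by
  ext k l
  have h' := congrFun (congrFun h (i, k)) (j, l)
  simp only [Matrix.mul_apply, Fintype.sum_prod_type, Matrix.kroneckerMap_apply,
    Matrix.one_apply, mul_ite, mul_one, mul_zero, ite_mul, zero_mul,
    Finset.sum_ite_eq, Finset.sum_ite_eq', Finset.mem_univ, if_true] at h' ⊢
  convert h' using 1 <;> simp [Yblk, Matrix.of_apply, Finset.mul_sum, Finset.sum_mul]

end Aux

/-- tensor-commutant theorem: for unital star-subalgebras
A ⊆ M_m(ℂ), B ⊆ M_n(ℂ), the commutant of A ⊗ B (the span of Kronecker products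
a ⊗ b with a ∈ A, b ∈ B) in M_m(ℂ) ⊗ M_n(ℂ) ≅ M_{mn}(ℂ) is Comm(A) ⊗ Comm(B). -/
theorem commutant_of_tensor_product
    {m n : Type*} [Fintype m] [DecidableEq m] [Fintype n] [DecidableEq n]
    (A : StarSubalgebra ℂ (Matrix m m ℂ)) (B : StarSubalgebra ℂ (Matrix n n ℂ)) :
    Set.centralizer
        (↑(Submodule.span ℂ
            {x : Matrix (m × n) (m × n) ℂ | ∃ a ∈ A, ∃ b ∈ B, x = a ⊗ₖ b}) :
          Set (Matrix (m × n) (m × n) ℂ))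
      = (↑(Submodule.span ℂ
            {x : Matrix (m × n) (m × n) ℂ |
              ∃ a ∈ Set.centralizer (A : Set (Matrix m m ℂ)),
                ∃ b ∈ Set.centralizer (B : Set (Matrix n n ℂ)), x = a ⊗ₖ b}) :
          Set (Matrix (m × n) (m × n) ℂ)) := by
  classical
  rw [aux_centralizer_span]
  apply Set.Subset.antisymm
  · -- hard direction
    intro x hx
    rw [Set.mem_centralizer_iff] at hx
    -- commutant of A as a submodule, with a linear projection onto it
    set CA : Submodule ℂ (Matrix m m ℂ) :=
      Subalgebra.toSubmodule (Subalgebra.centralizer ℂ (A : Set (Matrix m m ℂ))) with hCA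
    have hCAmem : ∀ y : Matrix m m ℂ, y ∈ CA ↔ y ∈ Set.centralizer (A : Set (Matrix m m ℂ)) := by
      intro y; rfl
    obtain ⟨W, hW⟩ := Submodule.exists_isCompl CA
    set π : Matrix m m ℂ →ₗ[ℂ] Matrix m m ℂ :=
      CA.subtype ∘ₗ CA.linearProjOfIsCompl W hW with hπ
    have hπ_mem : ∀ y, π y ∈ Set.centralizer (A : Set (Matrix m m ℂ)) := by
      intro y
      exact (CA.linearProjOfIsCompl W hW y).2
    have hπ_fix : ∀ y, y ∈ Set.centralizer (A : Set (Matrix m m ℂ)) → π y = y := by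
      intro y hy
      show CA.subtype (CA.linearProjOfIsCompl W hW y) = y
      exact congrArg Subtype.val
        (Submodule.linearProjOfIsCompl_apply_left hW ⟨y, (hCAmem y).2 hy⟩)
    -- each X-block is in the commutant of A
    have hXc : ∀ k l, Xblk x k l ∈ Set.centralizer (A : Set (Matrix m m ℂ)) := by
      intro k l
      rw [Set.mem_centralizer_iff]
      intro a ha
      exact commX x a (hx (a ⊗ₖ (1 : Matrix n n ℂ)) ⟨a, ha, 1, one_mem B, rfl⟩) k l
    -- each Y-block is in the commutant of B
    have hYc : ∀ i j, Yblk x i j ∈ Set.centralizer (B : Set (Matrix n n ℂ)) := by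
      intro i j
      rw [Set.mem_centralizer_iff]
      intro b hb
      exact commY x b (hx ((1 : Matrix m m ℂ) ⊗ₖ b) ⟨1, one_mem A, b, hb, rfl⟩) i j
    -- x equals the projected decomposition
    have hx_eq : x = ∑ k, ∑ l, (π (Xblk x k l)) ⊗ₖ Matrix.single k l (1 : ℂ) := by
      conv_lhs => rw [decompX x]
      refine Finset.sum_congr rfl fun k _ => Finset.sum_congr rfl fun l _ => ?_
      rw [hπ_fix _ (hXc k l)]
    -- the projected decomposition equals the Y-side decomposition
    have hswap : (∑ k, ∑ l, (π (Xblk x k l)) ⊗ₖ Matrix.single k l (1 : ℂ))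
        = ∑ i, ∑ j, (π (Matrix.single i j (1 : ℂ))) ⊗ₖ Yblk x i j := by
      ext ⟨i0, k0⟩ ⟨j0, l0⟩
      rw [sum_kron_std_right]
      rw [Xblk_eq_sum x k0 l0]
      rw [map_sum]
      simp only [map_sum, map_smul, Matrix.sum_apply, Matrix.smul_apply, smul_eq_mul]
      refine Finset.sum_congr rfl fun i _ => Finset.sum_congr rfl fun j _ => ?_
      simp only [Matrix.kroneckerMap_apply, Yblk, Matrix.of_apply]
      exact mul_comm _ _
    rw [hx_eq, hswap]
    apply Submodule.sum_mem
    intro i _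
    apply Submodule.sum_mem
    intro j _
    exact Submodule.subset_span ⟨π (Matrix.single i j 1), hπ_mem _, Yblk x i j, hYc i j, rfl⟩
  · -- easy direction
    intro y hy
    rw [Set.mem_centralizer_iff]
    intro g hg
    obtain ⟨a, ha, b, hb, rfl⟩ := hg
    induction hy using Submodule.span_induction with
    | mem z hz =>
      obtain ⟨a', ha', b', hb', rfl⟩ := hz
      rw [← Matrix.mul_kronecker_mul, ← Matrix.mul_kronecker_mul,
        ha' a ha, hb' b hb]
    | zero => simp
    | add z w hz hw ihz ihw => rw [mul_add, add_mul, ihz, ihw]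
    | smul c z hz ih => rw [mul_smul_comm, smul_mul_assoc, ih]
end

section
/- Let U be a unitary on a finite-dimensional Hilbert space H = H_L ⊗ H_C ⊗ H_R. Suppose that for every t ≥ 0 and every operator m on H_L, the operator U^t (m ⊗ 1_{CR}) U^{-t} is of the form m' ⊗ 1_R for some operator m' on H_L ⊗ H_C (left-wall condition). Then for every t ≥ 0 and every operator n on H_R, the operator U^t (1_{LC} ⊗ n) U^{-t} is of the form 1_L ⊗ n' for some operator n' on H_C ⊗ H_R (right-wall condition). -/
/-- The embedding of an operator on `H_L` as `m ⊗ 1_{CR}` on `H_L ⊗ H_C ⊗ H_R`. -/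
def embL {l c r : Type*} [DecidableEq c] [DecidableEq r]
    (m : Matrix l l ℂ) : Matrix (l × c × r) (l × c × r) ℂ :=
  fun p q => m p.1 q.1 * (if p.2 = q.2 then (1 : ℂ) else 0)

/-- The embedding of an operator on `H_L ⊗ H_C` as `m' ⊗ 1_R`. -/
def embLC {l c r : Type*} [DecidableEq r]
    (m : Matrix (l × c) (l × c) ℂ) : Matrix (l × c × r) (l × c × r) ℂ :=
  fun p q => m (p.1, p.2.1) (q.1, q.2.1) * (if p.2.2 = q.2.2 then (1 : ℂ) else 0)

/-- The embedding of an operator on `H_R` as `1_{LC} ⊗ n`. -/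
def embR {l c r : Type*} [DecidableEq l] [DecidableEq c]
    (n : Matrix r r ℂ) : Matrix (l × c × r) (l × c × r) ℂ :=
  fun p q => (if (p.1, p.2.1) = (q.1, q.2.1) then (1 : ℂ) else 0) * n p.2.2 q.2.2

/-- The embedding of an operator on `H_C ⊗ H_R` as `1_L ⊗ n'`. -/
def embCR {l c r : Type*} [DecidableEq l]
    (n : Matrix (c × r) (c × r) ℂ) : Matrix (l × c × r) (l × c × r) ℂ :=
  fun p q => (if p.1 = q.1 then (1 : ℂ) else 0) * n p.2 q.2

section Aux
variable {l c r : Type*} [Fintype l] [DecidableEq l] [Fintype c] [DecidableEq c]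
  [Fintype r] [DecidableEq r]

lemma embLC_mul_embR (M : Matrix (l × c) (l × c) ℂ) (n : Matrix r r ℂ) :
    embLC (r := r) M * embR n = embR n * embLC M := by
  funext p q
  simp [Matrix.mul_apply, embLC, embR, Fintype.sum_prod_type, Prod.ext_iff, ite_and,
    mul_comm, mul_assoc, mul_left_comm]

lemma embL_eq_embLC (m : Matrix l l ℂ) :
    embL (c := c) (r := r) m
      = embLC (fun p q => m p.1 q.1 * (if p.2 = q.2 then (1:ℂ) else 0)) := by
  funext p q
  simp only [embL, embLC, Prod.ext_iff, ite_and]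
  by_cases h1 : p.2.1 = q.2.1 <;> by_cases h2 : p.2.2 = q.2.2 <;> simp [h1, h2]

lemma embL_mul_embR (m : Matrix l l ℂ) (n : Matrix r r ℂ) :
    embL (c := c) m * embR n = embR n * embL m := by
  rw [embL_eq_embLC]; exact embLC_mul_embR _ _

lemma exists_embCR (X : Matrix (l × c × r) (l × c × r) ℂ)
    (h : ∀ m : Matrix l l ℂ, X * embL m = embL m * X) :
    ∃ n' : Matrix (c × r) (c × r) ℂ, X = embCR n' := by
  cases isEmpty_or_nonempty l with
  | inl hl =>
      exact ⟨0, by funext p q; exact hl.elim p.1⟩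
  | inr hl =>
      obtain ⟨j0⟩ := hl
      have key : ∀ (i j : l) (p q : l × c × r),
          (if j = q.1 then X p (i, q.2) else 0)
            = (if i = p.1 then X (j, p.2) q else 0) := by
        intro i j p q
        have := congrFun (congrFun (h (Matrix.single i j 1)) p) q
        simp only [Matrix.mul_apply, embL, Matrix.single, Matrix.of_apply,
          Fintype.sum_prod_type, ite_and, Prod.ext_iff] at this
        simpa [Finset.sum_ite_eq, Finset.sum_ite_eq', ite_and, mul_ite, mul_one, mul_zero,
          ite_mul, one_mul, zero_mul] using this
      refine ⟨fun s u => X (j0, s) (j0, u), ?_⟩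
      funext p q
      obtain ⟨a, s⟩ := p
      obtain ⟨b, u⟩ := q
      simp only [embCR]
      by_cases hab : a = b
      · subst hab
        have := key a j0 (a, s) (j0, u)
        simpa using this
      · have := key a a (a, s) (b, u)
        simp [Ne.symm hab, hab] at this ⊢
        exact this.symm

end Aux

/-- for a unitary U on H_L ⊗ H_C ⊗ H_R, the left-wall condition
(every U^t (m ⊗ 1_{CR}) U^{-t} has the form m' ⊗ 1_R) implies the right-wall
condition (every U^t (1_{LC} ⊗ n) U^{-t} has the form 1_L ⊗ n'). -/
theorem left_wall_iff_right_wall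
    {l c r : Type*} [Fintype l] [DecidableEq l] [Fintype c] [DecidableEq c]
    [Fintype r] [DecidableEq r]
    (U : Matrix (l × c × r) (l × c × r) ℂ)
    (hU : U ∈ Matrix.unitaryGroup (l × c × r) ℂ)
    (hleft : ∀ (t : ℕ) (m : Matrix l l ℂ),
      ∃ m' : Matrix (l × c) (l × c) ℂ,
        U ^ t * embL m * (star U) ^ t = embLC m') :
    ∀ (t : ℕ) (n : Matrix r r ℂ),
      ∃ n' : Matrix (c × r) (c × r) ℂ,
        U ^ t * embR n * (star U) ^ t = embCR n' := by
  intro t n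
  have hU1 : U * star U = 1 := hU.2
  have hU2 : star U * U = 1 := hU.1
  have hP1 : ∀ s : ℕ, U ^ s * (star U) ^ s = 1 := by
    intro s
    induction s with
    | zero => simp
    | succ k ih =>
        rw [pow_succ' U, pow_succ (star U)]
        calc U * U ^ k * ((star U) ^ k * star U)
            = U * (U ^ k * (star U) ^ k) * star U := by noncomm_ring
          _ = 1 := by rw [ih]; simp [hU1]
  have hP2 : ∀ s : ℕ, (star U) ^ s * U ^ s = 1 := by
    intro s
    induction s with
    | zero => simp
    | succ k ih =>
        rw [pow_succ (star U), pow_succ' U]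
        calc (star U) ^ k * star U * (U * U ^ k)
            = (star U) ^ k * (star U * U) * U ^ k := by noncomm_ring
          _ = 1 := by rw [hU2, mul_one, ih]
  -- the conjugation maps
  let Phi : ℕ → Matrix (l × c × r) (l × c × r) ℂ →ₗ[ℂ] Matrix (l × c × r) (l × c × r) ℂ :=
    fun s =>
      { toFun := fun X => U ^ s * X * (star U) ^ s
        map_add' := by intro X Y; noncomm_ring
        map_smul' := by intro a X; simp [Matrix.mul_smul, Matrix.smul_mul] }
  have hPhi : ∀ s X, Phi s X = U ^ s * X * (star U) ^ s := fun s X => rfl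
  have hPhi0 : ∀ X, Phi 0 X = X := by intro X; simp [hPhi]
  have hPhisucc : ∀ s X, Phi (s + 1) X = Phi 1 (Phi s X) := by
    intro s X
    simp only [hPhi, pow_one, pow_succ' U, pow_succ (star U)]
    noncomm_ring
  have hinj : Function.Injective (Phi 1) := by
    intro X Y h
    have h2 := congrArg (fun Z => star U * Z * U) h
    simp only [hPhi, pow_one] at h2
    calc X = (star U * U) * X * (star U * U) := by rw [hU2]; noncomm_ring
      _ = star U * (U * X * star U) * U := by noncomm_ring
      _ = star U * (U * Y * star U) * U := by rw [h2]
      _ = (star U * U) * Y * (star U * U) := by noncomm_ring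
      _ = Y := by rw [hU2]; noncomm_ring
  -- the commutant of embR, as a submodule
  let W : Submodule ℂ (Matrix (l × c × r) (l × c × r) ℂ) :=
    { carrier := {X | ∀ ν : Matrix r r ℂ, X * embR ν = embR ν * X}
      add_mem' := by intro a b ha hb ν; simp [Matrix.add_mul, Matrix.mul_add, ha ν, hb ν]
      zero_mem' := by intro ν; simp
      smul_mem' := by intro a X hX ν; simp [Matrix.smul_mul, Matrix.mul_smul, hX ν] }
  -- the span of all forward conjugates of left operators
  let S : Submodule ℂ (Matrix (l × c × r) (l × c × r) ℂ) :=
    Submodule.span ℂ {X | ∃ s m, X = Phi s (embL m)}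
  have hSW : S ≤ W := by
    rw [Submodule.span_le]
    rintro X ⟨s, m, rfl⟩
    obtain ⟨m', hm'⟩ := hleft s m
    intro ν
    rw [hPhi, hm']
    exact embLC_mul_embR m' ν
  have hmapS : S.map (Phi 1) = S := by
    have hle : S.map (Phi 1) ≤ S := by
      rw [Submodule.map_span, Submodule.span_le]
      rintro _ ⟨X, ⟨s, m, rfl⟩, rfl⟩
      exact Submodule.subset_span ⟨s + 1, m, (hPhisucc s _).symm⟩
    have hsurj : Function.Surjective (Phi 1) :=
      (LinearMap.injective_iff_surjective).mp hinj
    let e : Matrix (l × c × r) (l × c × r) ℂ ≃ₗ[ℂ] Matrix (l × c × r) (l × c × r) ℂ :=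
      LinearEquiv.ofBijective (Phi 1) ⟨hinj, hsurj⟩
    have : S.map (e : Matrix (l × c × r) (l × c × r) ℂ →ₗ[ℂ] _) = S.map (Phi 1) := rfl
    refine Submodule.eq_of_le_of_finrank_le hle ?_
    rw [← this, LinearEquiv.finrank_map_eq]
  have hback : ∀ X, Phi 1 X ∈ S → X ∈ S := by
    intro X hX
    rw [← hmapS] at hX
    obtain ⟨Y, hY, hYX⟩ := hX
    rwa [← hinj hYX]
  have hmem : ∀ s X, Phi s X ∈ S → X ∈ S := by
    intro s
    induction s with
    | zero => intro X hX; rwa [hPhi0] at hX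
    | succ k ih =>
        intro X hX
        rw [hPhisucc] at hX
        exact ih X (hback _ hX)
  -- conclude
  apply exists_embCR
  intro m
  set Y := (star U) ^ t * embL m * U ^ t with hYdef
  have hY : Phi t Y = embL m := by
    rw [hPhi, hYdef]
    calc U ^ t * ((star U) ^ t * embL m * U ^ t) * (star U) ^ t
        = (U ^ t * (star U) ^ t) * embL m * (U ^ t * (star U) ^ t) := by noncomm_ring
      _ = embL m := by rw [hP1]; noncomm_ring
  have hYS : Y ∈ S := by
    apply hmem t
    rw [hY]
    exact Submodule.subset_span ⟨0, m, (hPhi0 _).symm⟩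
  have hYW : Y * embR n = embR n * Y := hSW hYS n
  have hrw : embL m = U ^ t * Y * (star U) ^ t := by rw [← hPhi, hY]
  rw [hrw]
  calc U ^ t * embR n * star U ^ t * (U ^ t * Y * star U ^ t)
      = U ^ t * embR n * ((star U) ^ t * U ^ t) * Y * (star U) ^ t := by noncomm_ring
    _ = U ^ t * (embR n * Y) * (star U) ^ t := by rw [hP2]; noncomm_ring
    _ = U ^ t * (Y * embR n) * (star U) ^ t := by rw [hYW]
    _ = U ^ t * Y * ((star U) ^ t * U ^ t) * embR n * (star U) ^ t := by
          rw [hP2]; noncomm_ring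
    _ = U ^ t * Y * star U ^ t * (U ^ t * embR n * star U ^ t) := by noncomm_ring
end

section
/- Let U be a left-wall unitary on H_L ⊗ H_C ⊗ H_R with invariant algebra End(H_L) ⊗ A ⊗ 1_R, where A ⊆ End(H_C) decomposes as A ≅ ⊕_{i=1}^{k} End(D_i) ⊗ 1_{E_i} under a unitary isomorphism H_C ≅ ⊕_i D_i ⊗ E_i. Then for any product state |α⟩_L ⊗ |β⟩_{CR} and any t ≥ 0, the Schmidt rank of U^t(|α⟩ ⊗ |β⟩) across the bipartition L vs CR is at most ∑_i (dim D_i)² = dim_ℂ A. -/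
open Kronecker

/-- The block-diagonal operator `⊕_i A_i ⊗ B_i` on
`H = ⊕_i (H_L ⊗ D_i) ⊗ (E_i ⊗ H_R)`, where `A_i` acts on `H_L ⊗ D_i` and
`B_i` acts on `E_i ⊗ H_R`. -/
def blockOf {ι l r : Type*} [DecidableEq ι] (D E : ι → Type*)
    (A : ∀ i, Matrix (l × D i) (l × D i) ℂ)
    (B : ∀ i, Matrix (E i × r) (E i × r) ℂ) :
    Matrix (Σ i, (l × D i) × (E i × r)) (Σ i, (l × D i) × (E i × r)) ℂ :=
  fun p q =>
    if h : p.1 = q.1 then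
      A q.1 (cast (congrArg (fun i => l × D i) h) p.2.1) q.2.1 *
      B q.1 (cast (congrArg (fun i => E i × r) h) p.2.2) q.2.2
    else 0

lemma blockOf_eq {ι l r : Type*} [DecidableEq ι] (D E : ι → Type*)
    (A : ∀ i, Matrix (l × D i) (l × D i) ℂ)
    (B : ∀ i, Matrix (E i × r) (E i × r) ℂ) :
    blockOf D E A B = Matrix.blockDiagonal' (fun i => A i ⊗ₖ B i) := by
  ext ⟨i, p⟩ ⟨j, q⟩
  by_cases h : i = j
  · subst h
    simp [blockOf, Matrix.blockDiagonal', Matrix.kroneckerMap]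
  · simp [blockOf, Matrix.blockDiagonal', h]

lemma blockOf_pow {ι l r : Type*} [Fintype ι] [DecidableEq ι]
    [Fintype l] [DecidableEq l] [Fintype r] [DecidableEq r]
    (D E : ι → Type*) [∀ i, Fintype (D i)] [∀ i, DecidableEq (D i)]
    [∀ i, Fintype (E i)] [∀ i, DecidableEq (E i)]
    (T : ∀ i, Matrix (l × D i) (l × D i) ℂ)
    (R : ∀ i, Matrix (E i × r) (E i × r) ℂ) (t : ℕ) :
    (blockOf D E T R) ^ t = blockOf D E (fun i => T i ^ t) (fun i => R i ^ t) := by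
  rw [blockOf_eq, blockOf_eq, ← Matrix.blockDiagonal'_pow]
  have : ((fun i => T i ⊗ₖ R i) ^ t) = fun i => (T i ^ t) ⊗ₖ (R i ^ t) := by
    funext i
    rw [Pi.pow_apply]
    induction t with
    | zero => simp [Matrix.one_kronecker_one]
    | succ n ih => rw [pow_succ, pow_succ, pow_succ, ih, Matrix.mul_kronecker_mul]
  rw [this]

/-- entanglement bound for left-wall unitaries. Let
U = ⊕_i T_i ⊗ R_i be a left-wall unitary in the block form given by the wall
structure theorem (H_C ≅ ⊕_i D_i ⊗ E_i, invariant algebra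
End(H_L) ⊗ (⊕_i End(D_i) ⊗ 1_{E_i}) ⊗ 1_R). Then for any product state
|α⟩_L ⊗ |β⟩_{CR} and any t ≥ 0, the Schmidt rank of U^t(|α⟩ ⊗ |β⟩) across the
bipartition L vs CR (the rank of the corresponding reshaping matrix) is at most
∑_i (dim D_i)² = dim_ℂ A. -/
theorem left_wall_schmidt_rank_bound
    {ι l r : Type*} [Fintype ι] [DecidableEq ι]
    [Fintype l] [DecidableEq l] [Fintype r] [DecidableEq r]
    (D E : ι → Type*) [∀ i, Fintype (D i)] [∀ i, DecidableEq (D i)]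
    [∀ i, Fintype (E i)] [∀ i, DecidableEq (E i)]
    (T : ∀ i, Matrix (l × D i) (l × D i) ℂ)
    (R : ∀ i, Matrix (E i × r) (E i × r) ℂ)
    (hT : ∀ i, T i ∈ Matrix.unitaryGroup (l × D i) ℂ)
    (hR : ∀ i, R i ∈ Matrix.unitaryGroup (E i × r) ℂ)
    (α : l → ℂ) (β : (Σ i, D i × (E i × r)) → ℂ) (t : ℕ) :
    (Matrix.of fun (a : l) (y : Σ i, D i × (E i × r)) =>
        ((blockOf D E T R) ^ t).mulVec
            (fun p : Σ i, (l × D i) × (E i × r) =>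
              α p.2.1.1 * β ⟨p.1, (p.2.1.2, p.2.2)⟩)
            ⟨y.1, ((a, y.2.1), y.2.2)⟩).rank
      ≤ ∑ i, (Fintype.card (D i)) ^ 2 := by
  set F : Matrix l (Σ j, D j × D j) ℂ :=
    Matrix.of fun a s => ∑ a', (T s.1 ^ t) (a, s.2.1) (a', s.2.2) * α a' with hF
  set G : Matrix (Σ j, D j × D j) (Σ i, D i × (E i × r)) ℂ :=
    Matrix.of fun s y =>
      if h : s.1 = y.1 then
        (if cast (congrArg D h) s.2.1 = y.2.1 then
          ∑ er' : E y.1 × r,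
            (R y.1 ^ t) y.2.2 er' * β ⟨y.1, (cast (congrArg D h) s.2.2, er')⟩
        else 0)
      else 0 with hG
  have key : (Matrix.of fun (a : l) (y : Σ i, D i × (E i × r)) =>
        ((blockOf D E T R) ^ t).mulVec
            (fun p : Σ i, (l × D i) × (E i × r) =>
              α p.2.1.1 * β ⟨p.1, (p.2.1.2, p.2.2)⟩)
            ⟨y.1, ((a, y.2.1), y.2.2)⟩) = F * G := by
    ext a ⟨j, d, e, ρ⟩
    rw [blockOf_pow]
    simp only [Matrix.of_apply, Matrix.mulVec, dotProduct, Matrix.mul_apply]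
    rw [← Finset.univ_sigma_univ, Finset.sum_sigma]
    conv_rhs => rw [← Finset.univ_sigma_univ, Finset.sum_sigma]
    rw [Finset.sum_eq_single j (fun i _ hij => ?_) (by simp)]
    rotate_left
    · apply Finset.sum_eq_zero
      intro x _
      simp [blockOf, hij.symm]
    conv_rhs => rw [Finset.sum_eq_single j (fun i _ hij => by
      apply Finset.sum_eq_zero
      intro x _
      simp [hG, hij]) (by simp)]
    simp only [blockOf, hF, hG, Matrix.of_apply, eq_self_iff_true, cast_eq]
    simp only [dite_true, mul_ite, mul_zero]
    simp only [Fintype.sum_prod_type]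
    conv_lhs => rw [Finset.sum_comm]
    conv_rhs => rw [Finset.sum_comm]
    simp only [Finset.sum_ite_eq', Finset.mem_univ, if_true]
    refine Finset.sum_congr rfl fun d' _ => ?_
    simp only [Finset.sum_mul, Finset.mul_sum]
    conv_lhs => rw [Finset.sum_comm]
    refine Finset.sum_congr rfl fun e' _ => ?_
    rw [Finset.sum_comm]
    refine Finset.sum_congr rfl fun p' _ => Finset.sum_congr rfl fun a' _ => by ring
  rw [key]
  calc (F * G).rank ≤ F.rank := Matrix.rank_mul_le_left F G
    _ ≤ Fintype.card (Σ j, D j × D j) := Matrix.rank_le_card_width F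
    _ = ∑ i, (Fintype.card (D i)) ^ 2 := by
        simp [Fintype.card_sigma, Fintype.card_prod, sq]
end
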